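/- Let K be an infinite compact Hausdorff scattered space. Then the Banach space C(K) of continuous real-valued functions is isomorphic (as a topological vector space / Banach space, via a bounded linear bijection) to c₀ ⊕ C(K). -/

import Mathlib

/-!
The non-isolated points of `K` form a nonempty set (`K` is infinite and compact), and by
scatteredness one of them, `p`, is isolated among them; so a closed neighbourhood `C` of `p`
consists of isolated points apart from `p`. A compact set of isolated points is finite, hence
every injective sequence `xₙ` in `C \ {p}` converges to `p`. Extension by zero along `xₙ` embeds
`c₀` into `C(K)` with left inverse `f ↦ (f xₙ - f p)ₙ`, so `C(K) ≅ c₀ × Y`. Splitting a sequence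
into its even and odd terms gives `c₀ ≅ c₀ × c₀`, and then
`c₀ × C(K) ≅ c₀ × c₀ × Y ≅ c₀ × Y ≅ C(K)`.
-/

open Set

/-- A topological space is scattered if every nonempty subset has a point isolated in it. -/
def IsScatteredSpace (X : Type*) [TopologicalSpace X] : Prop :=
  ∀ S : Set X, S.Nonempty → ∃ x ∈ S, ∃ U : Set X, IsOpen U ∧ U ∩ S = {x}

open Filter Topology Function
open scoped ZeroAtInfty

section Topology

variable {X : Type*} [TopologicalSpace X]

theorem IsCompact.finite_of_forall_isOpen_singleton {s : Set X} (hs : IsCompact s)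
    (h : ∀ x ∈ s, IsOpen {x}) : s.Finite :=
  hs.finite <| isDiscrete_iff_forall_mem_exists_isOpen.mpr fun x hx =>
    ⟨{x}, h x hx, singleton_inter_of_mem hx⟩

theorem exists_not_isOpen_singleton [CompactSpace X] [Infinite X] : ∃ p : X, ¬IsOpen {p} := by
  by_contra! h
  exact infinite_univ (isCompact_univ.finite_of_forall_isOpen_singleton fun x _ => h x)

theorem tendsto_cofinite_of_forall_isOpen_singleton [CompactSpace X] {ι : Type*} {C : Set X}
    {p : X} (hC : IsClosed C) (hiso : ∀ t ∈ C, t ≠ p → IsOpen {t}) {x : ι → X}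
    (hx : Injective x) (hxC : ∀ i, x i ∈ C) : Tendsto x cofinite (𝓝 p) := by
  refine (nhds_basis_opens p).tendsto_right_iff.mpr fun W ⟨hpW, hW⟩ => ?_
  have hfin : (C \ W).Finite :=
    (hC.sdiff hW).isCompact.finite_of_forall_isOpen_singleton fun t ht =>
      hiso t ht.1 fun htp => ht.2 (htp ▸ hpW)
  exact (hfin.preimage hx.injOn).subset fun i hi => ⟨hxC i, hi⟩

theorem IsScatteredSpace.exists_injective_tendsto [CompactSpace X] [T2Space X] [Infinite X]
    (h : IsScatteredSpace X) :
    ∃ (x : ℕ → X) (p : X), Injective x ∧ (∀ n, IsOpen {x n}) ∧ p ∉ range x ∧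
      Tendsto x atTop (𝓝 p) := by
  obtain ⟨p, hp, U, hU, hUp⟩ := h {t | ¬IsOpen {t}} exists_not_isOpen_singleton
  have hpU : p ∈ U := (hUp.ge (mem_singleton p)).1
  obtain ⟨C, hCp, hC, hCU⟩ := exists_mem_nhds_isClosed_subset (hU.mem_nhds hpU)
  have hiso : ∀ t ∈ C, t ≠ p → IsOpen {t} := fun t ht htp => by
    by_contra hnot
    exact htp (hUp.le ⟨hCU ht, hnot⟩)
  have hCinf : C.Infinite := fun hfin => hp (isOpen_singleton_of_finite_mem_nhds p hCp hfin)
  have hinf : (C \ {p}).Infinite := hCinf.sdiff (finite_singleton p)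
  let x : ℕ → X := fun n => hinf.natEmbedding _ n
  have hxC : ∀ n, x n ∈ C \ {p} := fun n => (hinf.natEmbedding _ n).2
  have hx : Injective x := Subtype.val_injective.comp (hinf.natEmbedding _).injective
  refine ⟨x, p, hx, fun n => hiso _ (hxC n).1 (hxC n).2, ?_, ?_⟩
  · rintro ⟨n, hn⟩
    exact (hxC n).2 hn
  · rw [← Nat.cofinite_eq_atTop]
    exact tendsto_cofinite_of_forall_isOpen_singleton hC hiso hx fun n => (hxC n).1

end Topology

noncomputable section

namespace ZeroAtInftyContinuousMap

variable {α E : Type*} [TopologicalSpace α] [NormedAddCommGroup E]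

theorem norm_coe_le_norm (f : C₀(α, E)) (x : α) : ‖f x‖ ≤ ‖f‖ :=
  f.toBCF.norm_coe_le_norm x

theorem norm_le {f : C₀(α, E)} {C : ℝ} (hC : 0 ≤ C) : ‖f‖ ≤ C ↔ ∀ x, ‖f x‖ ≤ C :=
  BoundedContinuousFunction.norm_le hC

theorem tendsto_atTop_zero (a : C₀(ℕ, E)) : Tendsto a atTop (𝓝 0) := by
  simpa [cocompact_eq_cofinite, Nat.cofinite_eq_atTop] using a.zero_at_infty'

def ofTendsto (a : ℕ → E) (ha : Tendsto a atTop (𝓝 0)) : C₀(ℕ, E) :=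
  ⟨⟨a, continuous_of_discreteTopology⟩, by rwa [cocompact_eq_cofinite, Nat.cofinite_eq_atTop]⟩

@[simp]
theorem ofTendsto_apply (a : ℕ → E) (ha : Tendsto a atTop (𝓝 0)) (n : ℕ) :
    ofTendsto a ha n = a n :=
  rfl

def evens (a : C₀(ℕ, E)) : C₀(ℕ, E) :=
  ofTendsto (fun n => a (2 * n)) (a.tendsto_atTop_zero.comp <| StrictMono.tendsto_atTop
    fun _ _ h => by omega)

def odds (a : C₀(ℕ, E)) : C₀(ℕ, E) :=
  ofTendsto (fun n => a (2 * n + 1)) (a.tendsto_atTop_zero.comp <| StrictMono.tendsto_atTop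
    fun _ _ h => by omega)

def interleave (a b : C₀(ℕ, E)) : C₀(ℕ, E) :=
  ofTendsto (fun n => if n % 2 = 0 then a (n / 2) else b (n / 2)) <| by
    have hhalf : Tendsto (· / 2) atTop atTop := Nat.tendsto_div_const_atTop two_ne_zero
    refine squeeze_zero_norm (fun n => ?_) (by simpa using
      ((a.tendsto_atTop_zero.comp hhalf).norm.add (b.tendsto_atTop_zero.comp hhalf).norm))
    split_ifs <;> simp

@[simp] theorem evens_apply (a : C₀(ℕ, E)) (n : ℕ) : evens a n = a (2 * n) := rfl

@[simp] theorem odds_apply (a : C₀(ℕ, E)) (n : ℕ) : odds a n = a (2 * n + 1) := rfl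

theorem interleave_apply (a b : C₀(ℕ, E)) (n : ℕ) :
    interleave a b n = if n % 2 = 0 then a (n / 2) else b (n / 2) :=
  rfl

variable (𝕜 : Type*) [NormedField 𝕜] [NormedSpace 𝕜 E]

def evenOddSplit : C₀(ℕ, E) ≃L[𝕜] C₀(ℕ, E) × C₀(ℕ, E) :=
  .equivOfInverse
    (LinearMap.mkContinuous
      { toFun := fun a => (evens a, odds a)
        map_add' := fun a b => by ext <;> simp
        map_smul' := fun c a => by ext <;> simp } 1
      fun a => by
        rw [one_mul, Prod.norm_def]
        exact max_le ((norm_le (norm_nonneg a)).mpr fun n => a.norm_coe_le_norm _)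
          ((norm_le (norm_nonneg a)).mpr fun n => a.norm_coe_le_norm _))
    (LinearMap.mkContinuous
      { toFun := fun ab => interleave ab.1 ab.2
        map_add' := fun a b => by
          ext n; simp only [add_apply, interleave_apply]; split_ifs <;> rfl
        map_smul' := fun c a => by ext n; simp [interleave_apply] } 1
      fun ab => by
        rw [one_mul]
        refine (norm_le (norm_nonneg ab)).mpr fun n => ?_
        simp only [LinearMap.coe_mk, AddHom.coe_mk, interleave_apply]
        split_ifs
        · exact (ab.1.norm_coe_le_norm _).trans (norm_fst_le ab)
        · exact (ab.2.norm_coe_le_norm _).trans (norm_snd_le ab))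
    (fun a => by
      ext n
      change interleave (evens a) (odds a) n = a n
      rw [interleave_apply]
      split_ifs <;> simp only [evens_apply, odds_apply] <;> congr 1 <;> omega)
    (fun ab => by
      ext n <;> simp [interleave_apply, Nat.mul_add_div])

end ZeroAtInftyContinuousMap

theorem continuous_extend_zero {ι X E : Type*} [TopologicalSpace X] [T1Space X]
    [TopologicalSpace E] [Zero E] {x : ι → X} (hx : Injective x) (hiso : ∀ i, IsOpen {x i})
    {a : ι → E} (ha : Tendsto a cofinite (𝓝 0)) :
    Continuous (extend x a 0) := by
  refine continuous_iff_continuousAt.mpr fun t => ?_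
  by_cases ht : t ∈ range x
  · obtain ⟨i, rfl⟩ := ht
    rw [ContinuousAt, (isOpen_singleton_iff_nhds_eq_pure _).mp (hiso i)]
    exact tendsto_pure_nhds _ _
  · intro V hV
    rw [extend_apply' _ _ _ (by simpa using ht)] at hV
    have hF : IsClosed (x '' {i | a i ∉ V}) := (Finite.image x (ha hV)).isClosed
    show _ ∈ 𝓝 t
    filter_upwards [hF.isOpen_compl.mem_nhds fun ⟨i, _, hi⟩ => ht ⟨i, hi⟩] with s hs
    by_cases hsx : s ∈ range x
    · obtain ⟨i, rfl⟩ := hsx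
      rw [mem_preimage, hx.extend_apply]
      by_contra hi
      exact hs ⟨i, hi, rfl⟩
    · rw [mem_preimage, extend_apply' _ _ _ (by simpa using hsx)]
      exact mem_of_mem_nhds hV

section Decomposition

variable {K E : Type*} [TopologicalSpace K] [CompactSpace K] [NormedAddCommGroup E]
  (𝕜 : Type*) [NormedField 𝕜] [NormedSpace 𝕜 E] {x : ℕ → K} {p : K}

def extendByZeroCLM [T1Space K] (hx : Injective x) (hiso : ∀ n, IsOpen {x n}) :
    C₀(ℕ, E) →L[𝕜] C(K, E) :=
  LinearMap.mkContinuous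
    { toFun := fun a => ⟨extend x a 0, continuous_extend_zero hx hiso
        (Nat.cofinite_eq_atTop ▸ a.tendsto_atTop_zero)⟩
      map_add' := fun a b => by
        ext t; classical
        simp only [ContinuousMap.coe_mk, ContinuousMap.add_apply, extend_def]
        split_ifs <;> simp
      map_smul' := fun c a => by
        ext t; classical
        simp only [ContinuousMap.coe_mk, ContinuousMap.smul_apply, extend_def]
        split_ifs <;> simp } 1
    fun a => by
      rw [one_mul]
      refine (ContinuousMap.norm_le _ (norm_nonneg a)).mpr fun t => ?_
      classical
      simp only [LinearMap.coe_mk, AddHom.coe_mk, ContinuousMap.coe_mk, extend_def]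
      split_ifs
      exacts [a.norm_coe_le_norm _, by simp]

def evalSubLimitCLM (hconv : Tendsto x atTop (𝓝 p)) : C(K, E) →L[𝕜] C₀(ℕ, E) :=
  LinearMap.mkContinuous
    { toFun := fun f => ZeroAtInftyContinuousMap.ofTendsto (fun n => f (x n) - f p) <| by
        simpa using ((f.continuous.tendsto p).comp hconv).sub_const (f p)
      map_add' := fun f g => by ext n; simp; abel
      map_smul' := fun c f => by ext n; simp [smul_sub] } 2
    fun f => (ZeroAtInftyContinuousMap.norm_le (by positivity)).mpr fun n =>
      (norm_sub_le_of_le (f.norm_coe_le_norm _) (f.norm_coe_le_norm _)).trans_eq (two_mul _).symm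

theorem rightInverse_extendByZeroCLM [T1Space K] (hx : Injective x)
    (hiso : ∀ n, IsOpen {x n}) (hp : p ∉ range x) (hconv : Tendsto x atTop (𝓝 p)) :
    RightInverse (extendByZeroCLM (E := E) 𝕜 hx hiso) (evalSubLimitCLM 𝕜 hconv) := fun a => by
  ext n
  change extend x a 0 (x n) - extend x a 0 p = a n
  rw [hx.extend_apply, extend_apply' _ _ _ fun ⟨m, hm⟩ => hp ⟨m, hm⟩, Pi.zero_apply, sub_zero]

end Decomposition

def ContinuousLinearEquiv.prodAbsorb {R X A Y : Type*} [Semiring R] [AddCommMonoid X]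
    [AddCommMonoid A] [AddCommMonoid Y] [Module R X] [Module R A] [Module R Y]
    [TopologicalSpace X] [TopologicalSpace A] [TopologicalSpace Y]
    (e : X ≃L[R] A × Y) (s : A ≃L[R] A × A) : X ≃L[R] A × X :=
  e.trans <| (s.prodCongr (.refl R Y)).trans <| (prodAssoc R A A Y).trans <|
    (ContinuousLinearEquiv.refl R A).prodCongr e.symm

end

/-- For an infinite compact Hausdorff scattered space `K`, the Banach space `C(K)` is
isomorphic (linearly homeomorphic) to `c₀ ⊕ C(K)`, where `c₀` is the space of real
sequences vanishing at infinity. -/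
theorem stmt5 (K : Type*) [TopologicalSpace K] [CompactSpace K] [T2Space K] [Infinite K]
    (h : IsScatteredSpace K) :
    Nonempty (C(K, ℝ) ≃L[ℝ] (ZeroAtInftyContinuousMap ℕ ℝ × C(K, ℝ))) := by
  obtain ⟨x, p, hx, hiso, hp, hconv⟩ := h.exists_injective_tendsto
  exact ⟨(ContinuousLinearEquiv.equivOfRightInverse _ _
    (rightInverse_extendByZeroCLM ℝ hx hiso hp hconv)).prodAbsorb
      (ZeroAtInftyContinuousMap.evenOddSplit ℝ)⟩
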